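/- arXiv:1709.09132 — 6 statements merged into one kernel-verified Lean document; each statement's English description precedes it below -/
import Mathlib

section
/- Let 0 < a < 1/2, c* = √2(a-1/2), and let u(z), w(z) = u'(z) be the Nagumo front with u(z) = 1/(1 + e^{-(√2/2)z}). Define y(z) as the unique bounded solution of y' = -c* y - u. Then lim_{z→-∞} e^{c* z} y(z) = K where K = ∫_{-∞}^∞ e^{c* s} u(s) ds > 0; in particular y decays strictly slower than u as z → -∞. -/
open Real MeasureTheory Filter Topology

lemma exp_mul_integrableOn_Iic_aux {r : ℝ} (hr : 0 < r) :
    IntegrableOn (fun x : ℝ => Real.exp (r * x)) (Set.Iic 0) := by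
  have hcont : Continuous fun x : ℝ => Real.exp (r * x) :=
    Real.continuous_exp.comp (continuous_const.mul continuous_id)
  apply MeasureTheory.integrableOn_Iic_of_intervalIntegral_norm_bounded (1 / r) 0
    (f := fun x : ℝ => Real.exp (r * x)) (a := fun i : ℝ => i) (l := atBot)
    (fun i => hcont.integrableOn_Ioc) tendsto_id
  filter_upwards [eventually_le_atBot (0 : ℝ)] with i hi
  have h1 : (∫ x in i..0, ‖Real.exp (r * x)‖) = ∫ x in i..0, Real.exp (r * x) := by
    congr 1
    funext x
    exact Real.norm_of_nonneg (Real.exp_pos _).le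
  have h2 : (∫ x in i..0, Real.exp (r * x)) = r⁻¹ • ∫ x in r * i..r * 0, Real.exp x :=
    intervalIntegral.integral_comp_mul_left (fun x => Real.exp x) (ne_of_gt hr)
  rw [h1, h2, integral_exp]
  rw [smul_eq_mul, mul_zero, Real.exp_zero]
  rw [div_eq_inv_mul]
  have : Real.exp (r * i) ≥ 0 := (Real.exp_pos _).le
  nlinarith [inv_pos.mpr hr]

/-- For the unique bounded solution `y` of `y' = -c* y - u` along the Nagumo front,
`e^{c* z} y(z) → K = ∫ e^{c* s} u(s) ds > 0` as `z → -∞`. -/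
theorem stmt_3 (a : ℝ) (ha : 0 < a) (ha' : a < 1/2)
    (c : ℝ) (hc : c = Real.sqrt 2 * (a - 1/2))
    (u : ℝ → ℝ) (hu : ∀ z, u z = 1 / (1 + Real.exp (-(Real.sqrt 2 / 2) * z)))
    (y : ℝ → ℝ) (hy : Differentiable ℝ y)
    (hode : ∀ z, deriv y z = -c * y z - u z)
    (hbdd : ∃ M : ℝ, ∀ z, |y z| ≤ M)
    (K : ℝ) (hK : K = ∫ s : ℝ, Real.exp (c * s) * u s) :
    Tendsto (fun z => Real.exp (c * z) * y z) atBot (𝓝 K) ∧ 0 < K := by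
  have hs2 : (0:ℝ) < Real.sqrt 2 := Real.sqrt_pos.mpr (by norm_num)
  set β : ℝ := Real.sqrt 2 / 2 with hβdef
  have hβ : 0 < β := by positivity
  have hcneg : c < 0 := by rw [hc]; nlinarith
  have hcβ : 0 < c + β := by rw [hc, hβdef]; nlinarith
  set f : ℝ → ℝ := fun s => Real.exp (c * s) * u s with hfdef
  -- basic facts about u
  have hden : ∀ z : ℝ, 0 < 1 + Real.exp (-β * z) := fun z => by positivity
  have hupos : ∀ z, 0 < u z := fun z => by
    rw [hu z]; exact div_pos one_pos (hden z)
  have hule1 : ∀ z, u z ≤ 1 := fun z => by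
    rw [hu z]
    rw [div_le_one (hden z)]
    nlinarith [Real.exp_pos (-β * z)]
  have huleexp : ∀ z, u z ≤ Real.exp (β * z) := fun z => by
    rw [hu z]
    have h1 : (1 : ℝ) / (1 + Real.exp (-β * z)) ≤ 1 / Real.exp (-β * z) :=
      one_div_le_one_div_of_le (Real.exp_pos _) (by nlinarith)
    have h2 : (1 : ℝ) / Real.exp (-β * z) = Real.exp (β * z) := by
      rw [neg_mul, Real.exp_neg, one_div, inv_inv]
    linarith [h1, h2.le]
  have hu_cont : Continuous u := by
    have : Continuous fun z : ℝ => 1 / (1 + Real.exp (-β * z)) :=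
      continuous_const.div (by continuity) (fun z => (hden z).ne')
    exact Continuous.congr this (fun z => (hu z).symm)
  have hf_cont : Continuous f :=
    (Real.continuous_exp.comp (continuous_const.mul continuous_id)).mul hu_cont
  have hf_pos : ∀ s, 0 < f s := fun s => mul_pos (Real.exp_pos _) (hupos s)
  -- integrability
  have int_Iic : IntegrableOn f (Set.Iic 0) := by
    refine (exp_mul_integrableOn_Iic_aux hcβ).mono' hf_cont.aestronglyMeasurable.restrict
      (ae_of_all _ fun s => ?_)
    rw [Real.norm_of_nonneg (hf_pos s).le]
    calc f s = Real.exp (c * s) * u s := rfl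
      _ ≤ Real.exp (c * s) * Real.exp (β * s) :=
        mul_le_mul_of_nonneg_left (huleexp s) (Real.exp_pos _).le
      _ = Real.exp ((c + β) * s) := by rw [← Real.exp_add]; ring_nf
  have int_Ioi : IntegrableOn f (Set.Ioi 0) := by
    have hbase : IntegrableOn (fun x : ℝ => Real.exp (-(-c) * x)) (Set.Ioi 0) :=
      exp_neg_integrableOn_Ioi 0 (neg_pos.mpr hcneg)
    have hbase' : IntegrableOn (fun x : ℝ => Real.exp (c * x)) (Set.Ioi 0) := by
      simpa using hbase
    refine hbase'.mono' hf_cont.aestronglyMeasurable.restrict (ae_of_all _ fun s => ?_)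
    rw [Real.norm_of_nonneg (hf_pos s).le]
    calc f s = Real.exp (c * s) * u s := rfl
      _ ≤ Real.exp (c * s) * 1 := mul_le_mul_of_nonneg_left (hule1 s) (Real.exp_pos _).le
      _ = Real.exp (c * s) := mul_one _
  have int_R : Integrable f := by
    rw [← MeasureTheory.integrableOn_univ, ← Set.Iic_union_Ioi (a := (0:ℝ))]
    exact int_Iic.union int_Ioi
  have hsplit : (∫ s in Set.Iic 0, f s) + ∫ s in Set.Ioi 0, f s = ∫ s, f s :=
    intervalIntegral.integral_Iic_add_Ioi int_Iic int_Ioi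
  -- the function g and its derivative
  set g : ℝ → ℝ := fun z => Real.exp (c * z) * y z with hgdef
  have hg : ∀ z, HasDerivAt g (-(f z)) z := by
    intro z
    have h1 : HasDerivAt (fun z : ℝ => Real.exp (c * z)) (Real.exp (c * z) * (c * 1)) z :=
      ((hasDerivAt_id z).const_mul c).exp
    have h2 : HasDerivAt y (deriv y z) z := (hy z).hasDerivAt
    have h3 := h1.mul h2
    have : Real.exp (c * z) * (c * 1) * y z + Real.exp (c * z) * deriv y z = -(f z) := by
      rw [hode z, hfdef]; ring
    rw [this] at h3
    exact h3
  -- integral formula for g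
  have hform : ∀ z : ℝ, g z = g 0 - ∫ s in (0:ℝ)..z, f s := by
    intro z
    have h1 : (∫ s in (0:ℝ)..z, -(f s)) = g z - g 0 :=
      intervalIntegral.integral_eq_sub_of_hasDerivAt (fun x _ => hg x)
        (hf_cont.neg.intervalIntegrable 0 z)
    rw [intervalIntegral.integral_neg] at h1
    linarith
  -- g tends to 0 at +∞
  obtain ⟨M, hM⟩ := hbdd
  have hczBot : Tendsto (fun z : ℝ => c * z) atTop atBot := by
    have h : Tendsto (fun z : ℝ => (-c) * z) atTop atTop :=
      (tendsto_id.const_mul_atTop (neg_pos.mpr hcneg))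
    have h2 := tendsto_neg_atTop_atBot.comp h
    have heq : (Neg.neg ∘ fun z : ℝ => -c * z) = fun z : ℝ => c * z := by
      funext z; simp
    rwa [heq] at h2
  have hbound0 : Tendsto (fun z : ℝ => Real.exp (c * z) * M) atTop (𝓝 0) := by
    have := (Real.tendsto_exp_atBot.comp hczBot).mul_const M
    simpa using this
  have hgTop0 : Tendsto g atTop (𝓝 0) := by
    apply squeeze_zero_norm _ hbound0
    intro z
    rw [hgdef]
    simp only [norm_mul, Real.norm_eq_abs, Real.abs_exp]
    exact mul_le_mul_of_nonneg_left (hM z) (Real.exp_pos _).le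
  -- identify g 0
  have hBtend : Tendsto (fun z : ℝ => ∫ s in (0:ℝ)..z, f s) atTop (𝓝 (∫ s in Set.Ioi 0, f s)) :=
    MeasureTheory.intervalIntegral_tendsto_integral_Ioi 0 int_Ioi tendsto_id
  have hgTop : Tendsto g atTop (𝓝 (g 0 - ∫ s in Set.Ioi 0, f s)) := by
    have := (tendsto_const_nhds (x := g 0) (f := atTop)).sub hBtend
    exact this.congr (fun z => (hform z).symm)
  have hg0 : g 0 = ∫ s in Set.Ioi 0, f s := by
    have := tendsto_nhds_unique hgTop hgTop0
    linarith
  -- limit at -∞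
  have hAtend : Tendsto (fun z : ℝ => ∫ s in z..(0:ℝ), f s) atBot (𝓝 (∫ s in Set.Iic 0, f s)) :=
    MeasureTheory.intervalIntegral_tendsto_integral_Iic 0 int_Iic tendsto_id
  have hform' : ∀ z : ℝ, g z = g 0 + ∫ s in z..(0:ℝ), f s := by
    intro z
    rw [hform z, intervalIntegral.integral_symm]
    ring
  have hgBot : Tendsto g atBot (𝓝 (g 0 + ∫ s in Set.Iic 0, f s)) := by
    have := (tendsto_const_nhds (x := g 0) (f := atBot)).add hAtend
    exact this.congr (fun z => (hform' z).symm)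
  have hKval : g 0 + ∫ s in Set.Iic 0, f s = K := by
    rw [hg0, hK]
    rw [← hsplit]
    ring
  constructor
  · rw [← hKval]
    exact hgBot
  · rw [hK]
    refine (MeasureTheory.integral_pos_iff_support_of_nonneg (fun s => (hf_pos s).le) int_R).mpr ?_
    have hsupp : Function.support f = Set.univ := Set.eq_univ_of_forall fun s => (hf_pos s).ne'
    rw [hsupp, Real.volume_univ]
    exact ENNReal.zero_lt_top
end

section
/- Let 0 < a < 1/2, c = √2(a-1/2), and let (u(z), w(z)) be the Nagumo front (u' = w, w' = -c w - f(u), u(-∞)=0, u(+∞)=1). Suppose α(z) solves the scalar ODE α' = -c α - w(z)², with w → 0 faster than e^{-cz} as z → -∞ and α bounded by appropriate growth. Then α(z) = -e^{-cz} ∫_{-∞}^z e^{cs} w(s)² ds, and lim_{z→∞} e^{cz} α(z) = -∫_{-∞}^∞ e^{cs} w(s)² ds < 0. -/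
/-!
Multiplying by the integrating factor `e^{cz}` turns `α' = -cα - w²` into
`(e^{cz} α)' = -e^{cz} w²`, so the decay of `e^{cz} α` at `-∞` pins `e^{cz} α(z)` down as
`-∫_{-∞}^z e^{cs} w²`. The front derivative `w` decays like `e^{-(√2/2)|z|}`, and
`|c| < √2`, so `e^{cs} w(s)²` is integrable on the whole line; the limit at `+∞` is then the
full integral, which is negative since `w` does not vanish.
-/

open Real MeasureTheory Filter Topology Set

section IntegratingFactor

variable {c : ℝ} {α h : ℝ → ℝ}

theorem hasDerivAt_exp_mul_of_deriv_eq (hα : Differentiable ℝ α)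
    (hode : ∀ z, deriv α z = -c * α z - h z) (z : ℝ) :
    HasDerivAt (fun z => exp (c * z) * α z) (-(exp (c * z) * h z)) z := by
  refine ((((hasDerivAt_id' z).const_mul c).exp).mul (hα z).hasDerivAt).congr_deriv ?_
  rw [hode z]
  ring

theorem exp_mul_eq_neg_setIntegral_Iic (hα : Differentiable ℝ α)
    (hode : ∀ z, deriv α z = -c * α z - h z)
    (hint : Integrable fun s => exp (c * s) * h s)
    (hdecay : Tendsto (fun z => exp (c * z) * α z) atBot (𝓝 0)) (z : ℝ) :
    exp (c * z) * α z = -∫ s in Iic z, exp (c * s) * h s := by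
  have := integral_Iic_of_hasDerivAt_of_tendsto' (a := z)
    (fun s _ => hasDerivAt_exp_mul_of_deriv_eq hα hode s) hint.neg.integrableOn hdecay
  rw [integral_neg, sub_zero] at this
  linarith

end IntegratingFactor

theorem tendsto_setIntegral_Iic_atTop {E : Type*} [NormedAddCommGroup E] [NormedSpace ℝ E]
    {μ : Measure ℝ} {f : ℝ → E} (hf : Integrable f μ) :
    Tendsto (fun z => ∫ s in Iic z, f s ∂μ) atTop (𝓝 (∫ s, f s ∂μ)) := by
  have := tendsto_setIntegral_of_monotone (s := fun z : ℝ => Iic z) (fun z => measurableSet_Iic)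
    (fun x y hxy => Iic_subset_Iic.mpr hxy) (by rw [iUnion_Iic]; exact hf.integrableOn)
  rwa [iUnion_Iic, setIntegral_univ] at this

theorem integrable_exp_neg_mul_abs {b : ℝ} (hb : 0 < b) :
    Integrable fun x : ℝ => exp (-(b * |x|)) := by
  rw [← integrableOn_univ, ← Iic_union_Ioi (a := 0)]
  refine IntegrableOn.union ?_ ?_
  · refine (integrableOn_exp_mul_Iic hb 0).congr_fun (fun x hx => ?_) measurableSet_Iic
    rw [abs_of_nonpos hx, mul_neg, neg_neg]
  · refine (exp_neg_integrableOn_Ioi 0 hb).congr_fun (fun x hx => ?_) measurableSet_Ioi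
    simp only [abs_of_pos (mem_Ioi.mp hx), neg_mul]

theorem integrable_exp_mul_mul_sq_of_abs_le {c k C : ℝ} {w : ℝ → ℝ} (hw : Continuous w)
    (hbound : ∀ s, |w s| ≤ C * exp (-(k * |s|))) (hck : |c| < 2 * k) :
    Integrable fun s => exp (c * s) * w s ^ 2 := by
  refine ((integrable_exp_neg_mul_abs (sub_pos.mpr hck)).const_mul (C ^ 2)).mono'
    (by fun_prop) (Eventually.of_forall fun s => ?_)
  have hw2 : w s ^ 2 ≤ C ^ 2 * exp (-(2 * k * |s|)) := by
    calc w s ^ 2 = |w s| ^ 2 := (sq_abs _).symm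
      _ ≤ (C * exp (-(k * |s|))) ^ 2 := pow_le_pow_left₀ (abs_nonneg _) (hbound s) 2
      _ = C ^ 2 * exp (-(2 * k * |s|)) := by rw [mul_pow, ← exp_nat_mul]; ring_nf
  have hcs : c * s ≤ |c| * |s| := abs_mul c s ▸ le_abs_self (c * s)
  calc ‖exp (c * s) * w s ^ 2‖ = exp (c * s) * w s ^ 2 := norm_of_nonneg (by positivity)
    _ ≤ exp (c * s) * (C ^ 2 * exp (-(2 * k * |s|))) := by gcongr
    _ = C ^ 2 * exp (c * s - 2 * k * |s|) := by rw [sub_eq_add_neg, exp_add]; ring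
    _ ≤ C ^ 2 * exp (-((2 * k - |c|) * |s|)) := by gcongr; linarith

theorem hasDerivAt_logistic (k z : ℝ) :
    HasDerivAt (fun z => 1 / (1 + exp (-k * z)))
      (k * exp (-k * z) / (1 + exp (-k * z)) ^ 2) z := by
  have hpos : 0 < 1 + exp (-k * z) := by positivity
  simp only [one_div]
  refine (((((hasDerivAt_id' z).const_mul (-k)).exp).const_add 1).inv hpos.ne').congr_deriv ?_
  ring

theorem logistic_deriv_le_exp_neg_mul_abs {k : ℝ} (hk : 0 ≤ k) (z : ℝ) :
    k * exp (-k * z) / (1 + exp (-k * z)) ^ 2 ≤ k * exp (-(k * |z|)) := by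
  have hE := exp_pos (-k * z)
  rcases le_or_gt 0 z with hz | hz
  · rw [abs_of_nonneg hz, ← neg_mul]
    exact div_le_self (by positivity) (by nlinarith)
  · rw [abs_of_neg hz, mul_neg, neg_neg, ← neg_neg (k * z), ← neg_mul, exp_neg,
      ← div_eq_mul_inv, div_le_div_iff₀ (by positivity) hE]
    nlinarith [mul_nonneg hk (sq_nonneg (exp (-k * z)))]

/-- Melnikov computation along the fast front: the solution `α` of
`α' = -cα - w²` which does not grow like `e^{-cz}` at `-∞` is
`α(z) = -e^{-cz} ∫_{-∞}^z e^{cs} w(s)² ds`, and `e^{cz} α(z)` tends to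
`-∫_{-∞}^∞ e^{cs} w(s)² ds < 0` as `z → ∞`. -/
theorem stmt_4 (a : ℝ) (ha : 0 < a) (ha' : a < 1/2)
    (c : ℝ) (hc : c = Real.sqrt 2 * (a - 1/2))
    (u : ℝ → ℝ) (hu : ∀ z, u z = 1 / (1 + Real.exp (-(Real.sqrt 2 / 2) * z)))
    (w : ℝ → ℝ) (hw : ∀ z, w z = deriv u z)
    (α : ℝ → ℝ) (hα : Differentiable ℝ α)
    (hode : ∀ z, deriv α z = -c * α z - (w z) ^ 2)
    (hdecay : Tendsto (fun z => Real.exp (c * z) * α z) atBot (𝓝 0)) :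
    (∀ z, α z = -Real.exp (-c * z) * ∫ s in Set.Iic z, Real.exp (c * s) * (w s) ^ 2) ∧
    Tendsto (fun z => Real.exp (c * z) * α z) atTop
      (𝓝 (-∫ s : ℝ, Real.exp (c * s) * (w s) ^ 2)) ∧
    -∫ s : ℝ, Real.exp (c * s) * (w s) ^ 2 < 0 := by
  set k := √2 / 2 with hk_def
  have hk : 0 < k := by positivity
  have hck : |c| < 2 * k := by
    have : 0 < √2 := by positivity
    rw [abs_lt, hc, hk_def]; constructor <;> nlinarith
  have hw_eq : w = fun z => k * exp (-k * z) / (1 + exp (-k * z)) ^ 2 := by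
    ext z; rw [hw, funext hu, (hasDerivAt_logistic k z).deriv]
  have hw_cont : Continuous w := by
    rw [hw_eq]; exact Continuous.div (by fun_prop) (by fun_prop) fun z => by positivity
  have hint : Integrable fun s => exp (c * s) * w s ^ 2 :=
    integrable_exp_mul_mul_sq_of_abs_le hw_cont (fun s => by
      rw [hw_eq, abs_of_nonneg (by positivity)]
      exact logistic_deriv_le_exp_neg_mul_abs hk.le s) hck
  have key := exp_mul_eq_neg_setIntegral_Iic hα hode hint hdecay
  refine ⟨fun z => ?_, ?_, ?_⟩
  · rw [neg_mul, ← mul_neg, ← key z, ← mul_assoc, ← exp_add, neg_mul, neg_add_cancel, exp_zero,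
      one_mul]
  · exact (tendsto_setIntegral_Iic_atTop hint).neg.congr fun z => (key z).symm
  · have hw0 : w 0 ≠ 0 := by rw [hw_eq]; positivity
    exact neg_neg_of_pos (integral_pos_of_integrable_nonneg_nonzero (x := 0) (by fun_prop) hint
      (fun s => by positivity) (mul_ne_zero (exp_ne_zero _) (pow_ne_zero 2 hw0)))
end

section
/- Let J be the 4×4 matrix with rows (0,0,1,0), (0,0,0,-1), (-1,0,0,0), (0,1,0,0), and define ω(a,b) = ⟨a, Jb⟩. Let A(z) be the 4×4 matrix with rows (0,0,1,0), (0,0,0,ε), (λ - f'(û(z)), 1, -c, 0), (-1, λ/ε + γ, 0, -c), for any continuous function û, constants ε > 0, γ, c, and λ ∈ ℝ. If Y₁, Y₂ solve Y' = A(z)Y, then (d/dz) ω(Y₁(z), Y₂(z)) = -c ω(Y₁(z), Y₂(z)); consequently e^{cz} ω(Y₁(z), Y₂(z)) is constant in z. -/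
open Real Matrix

/-!
Writing `ω(a, b) = a ⬝ᵥ J *ᵥ b`, the product rule gives
`ω(Y₁, Y₂)' = ω(A Y₁, Y₂) + ω(Y₁, A Y₂) = Y₁ ⬝ᵥ (Aᵀ J + J A) *ᵥ Y₂`, and for the FitzHugh–Nagumo
coefficient matrix `Aᵀ J + J A = -c J` whatever the entries `ε`, `λ - f'(û)` and `λ/ε + γ` are.
So `ω(Y₁, Y₂)` solves `w' = -c w`, and `e^{cz} w` has derivative zero.
-/

section Calculus

variable {𝕜 : Type*} [NontriviallyNormedField 𝕜] {ι : Type*} [Fintype ι]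

theorem HasDerivAt.dotProduct {u v : 𝕜 → ι → 𝕜} {u' v' : ι → 𝕜} {z : 𝕜}
    (hu : HasDerivAt u u' z) (hv : HasDerivAt v v' z) :
    HasDerivAt (fun t => u t ⬝ᵥ v t) (u' ⬝ᵥ v z + u z ⬝ᵥ v') z := by
  refine (HasDerivAt.fun_sum (u := Finset.univ)
    fun i _ => (hasDerivAt_pi.mp hu i).fun_mul (hasDerivAt_pi.mp hv i)).congr_deriv ?_
  exact Finset.sum_add_distrib

theorem HasDerivAt.const_mulVec (M : Matrix ι ι 𝕜) {v : 𝕜 → ι → 𝕜} {v' : ι → 𝕜} {z : 𝕜}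
    (hv : HasDerivAt v v' z) : HasDerivAt (fun t => M *ᵥ v t) (M *ᵥ v') z :=
  hasDerivAt_pi.mpr fun i =>
    HasDerivAt.fun_sum fun j _ => (hasDerivAt_pi.mp hv j).const_mul (M i j)

theorem HasDerivAt.dotProduct_mulVec_of_transpose_mul_add_mul_eq_smul
    {A J : Matrix ι ι 𝕜} {k : 𝕜} (hAJ : Aᵀ * J + J * A = k • J)
    {Y₁ Y₂ : 𝕜 → ι → 𝕜} {z : 𝕜}
    (hY₁ : HasDerivAt Y₁ (A *ᵥ Y₁ z) z) (hY₂ : HasDerivAt Y₂ (A *ᵥ Y₂ z) z) :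
    HasDerivAt (fun t => Y₁ t ⬝ᵥ J *ᵥ Y₂ t) (k * (Y₁ z ⬝ᵥ J *ᵥ Y₂ z)) z := by
  convert hY₁.dotProduct (hY₂.const_mulVec J) using 1
  rw [← smul_eq_mul, ← dotProduct_smul, ← smul_mulVec, ← hAJ, add_mulVec, dotProduct_add,
    ← mulVec_mulVec, ← mulVec_mulVec, dotProduct_mulVec, vecMul_transpose]

end Calculus

theorem exp_mul_mul_eq_of_hasDerivAt_neg_mul {w : ℝ → ℝ} {c : ℝ}
    (hw : ∀ z, HasDerivAt w (-c * w z) z) (z₁ z₂ : ℝ) :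
    exp (c * z₁) * w z₁ = exp (c * z₂) * w z₂ := by
  have hderiv : ∀ z, HasDerivAt (fun t => exp (c * t) * w t) 0 z := fun z =>
    (((hasDerivAt_id' z).const_mul c).exp.fun_mul (hw z)).congr_deriv (by ring)
  exact is_const_of_deriv_eq_zero (fun z => (hderiv z).differentiableAt)
    (fun z => (hderiv z).deriv) z₁ z₂

theorem fitzHughNagumo_transpose_mul_add_mul_eq {R : Type*} [CommRing R] (ε p q c : R) :
    let A : Matrix (Fin 4) (Fin 4) R := !![0,0,1,0; 0,0,0,ε; p,1,-c,0; -1,q,0,-c]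
    let J : Matrix (Fin 4) (Fin 4) R := !![0,0,1,0; 0,0,0,-1; -1,0,0,0; 0,1,0,0]
    Aᵀ * J + J * A = (-c) • J := by
  ext i j
  fin_cases i <;> fin_cases j <;> simp [Matrix.mul_apply, Fin.sum_univ_four]

theorem stmt_7_general (ε γ c lam : ℝ)
    (uhat : ℝ → ℝ)
    (f : ℝ → ℝ)
    (J : Matrix (Fin 4) (Fin 4) ℝ)
    (hJ : J = !![0,0,1,0; 0,0,0,-1; -1,0,0,0; 0,1,0,0])
    (ω : (Fin 4 → ℝ) → (Fin 4 → ℝ) → ℝ)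
    (hω : ∀ x y, ω x y = x ⬝ᵥ (J *ᵥ y))
    (A : ℝ → Matrix (Fin 4) (Fin 4) ℝ)
    (hA : ∀ z, A z = !![0,0,1,0; 0,0,0,ε;
      lam - deriv f (uhat z), 1, -c, 0; -1, lam/ε + γ, 0, -c])
    (Y₁ Y₂ : ℝ → Fin 4 → ℝ)
    (hY₁ : ∀ z, HasDerivAt Y₁ (A z *ᵥ Y₁ z) z)
    (hY₂ : ∀ z, HasDerivAt Y₂ (A z *ᵥ Y₂ z) z) :
    (∀ z, HasDerivAt (fun t => ω (Y₁ t) (Y₂ t)) (-c * ω (Y₁ z) (Y₂ z)) z) ∧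
    (∀ z₁ z₂ : ℝ, Real.exp (c * z₁) * ω (Y₁ z₁) (Y₂ z₁)
      = Real.exp (c * z₂) * ω (Y₁ z₂) (Y₂ z₂)) := by
  have hAJ : ∀ z, (A z)ᵀ * J + J * A z = (-c) • J := fun z => by
    rw [hA, hJ]
    exact fitzHughNagumo_transpose_mul_add_mul_eq ..
  have hderiv : ∀ z, HasDerivAt (fun t => ω (Y₁ t) (Y₂ t)) (-c * ω (Y₁ z) (Y₂ z)) z :=
    fun z => by
      simpa only [hω] using
        HasDerivAt.dotProduct_mulVec_of_transpose_mul_add_mul_eq_smul (hAJ z) (hY₁ z) (hY₂ z)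
  exact ⟨hderiv, exp_mul_mul_eq_of_hasDerivAt_neg_mul hderiv⟩

/-- The symplectic form `ω(a,b) = ⟨a, Jb⟩` evaluated on any two solutions of the
linearized eigenvalue system `Y' = A(z)Y` satisfies `ω' = -cω`; hence
`e^{cz} ω(Y₁(z), Y₂(z))` is constant in `z`. -/
theorem stmt_7 (a ε γ c lam : ℝ) (hε : 0 < ε)
    (uhat : ℝ → ℝ) (huhat : Continuous uhat)
    (f : ℝ → ℝ) (hf : ∀ x, f x = x * (1 - x) * (x - a))
    (J : Matrix (Fin 4) (Fin 4) ℝ)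
    (hJ : J = !![0,0,1,0; 0,0,0,-1; -1,0,0,0; 0,1,0,0])
    (ω : (Fin 4 → ℝ) → (Fin 4 → ℝ) → ℝ)
    (hω : ∀ x y, ω x y = x ⬝ᵥ (J *ᵥ y))
    (A : ℝ → Matrix (Fin 4) (Fin 4) ℝ)
    (hA : ∀ z, A z = !![0,0,1,0; 0,0,0,ε;
      lam - deriv f (uhat z), 1, -c, 0; -1, lam/ε + γ, 0, -c])
    (Y₁ Y₂ : ℝ → Fin 4 → ℝ)
    (hY₁ : ∀ z, HasDerivAt Y₁ (A z *ᵥ Y₁ z) z)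
    (hY₂ : ∀ z, HasDerivAt Y₂ (A z *ᵥ Y₂ z) z) :
    (∀ z, HasDerivAt (fun t => ω (Y₁ t) (Y₂ t)) (-c * ω (Y₁ z) (Y₂ z)) z) ∧
    (∀ z₁ z₂ : ℝ, Real.exp (c * z₁) * ω (Y₁ z₁) (Y₂ z₁)
      = Real.exp (c * z₂) * ω (Y₁ z₂) (Y₂ z₂)) :=
  stmt_7_general ε γ c lam uhat f J hJ ω hω A hA Y₁ Y₂ hY₁ hY₂
end

section
/- Let 0 < a < 1/2, and consider on the Nagumo front (parametrized by u ∈ (0,1)) the planes U(u) = span{(1, 0, √2/2 - √2 u, 0), (0,0,0,1)} and V = span{(1, -a, 0, (1/c)(1+γa)), (1, 0, -a√2, √2)} in ℝ⁴ with coordinates (p,q,r,s), where c = √2(a-1/2) and γ ≥ 0. Then U(u) ∩ V ≠ {0} if and only if u = a + 1/2, and at that value the intersection is one-dimensional, spanned by ξ = (1, 0, -a√2, √2). -/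
open Real

/-- Along the fast front, the tangent plane `U(u)` to the unstable-manifold cylinder
meets the stable subspace `V = V^s(0)` nontrivially iff `u = a + 1/2`, and at that
value the intersection is the line spanned by `ξ = (1, 0, -a√2, √2)`. -/
theorem stmt_12 (a γ : ℝ) (ha : 0 < a) (ha' : a < 1/2) (hγ : 0 ≤ γ)
    (c : ℝ) (hc : c = Real.sqrt 2 * (a - 1/2))
    (U : ℝ → Submodule ℝ (Fin 4 → ℝ))
    (hU : ∀ u, U u = Submodule.span ℝ
      {![1, 0, Real.sqrt 2 / 2 - Real.sqrt 2 * u, 0], ![0, 0, 0, 1]})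
    (V : Submodule ℝ (Fin 4 → ℝ))
    (hV : V = Submodule.span ℝ
      {![1, -a, 0, (1/c) * (1 + γ * a)],
       ![1, 0, -a * Real.sqrt 2, Real.sqrt 2]})
    (ξ : Fin 4 → ℝ) (hξ : ξ = ![1, 0, -a * Real.sqrt 2, Real.sqrt 2]) :
    (∀ u : ℝ, 0 < u → u < 1 → (U u ⊓ V ≠ ⊥ ↔ u = a + 1/2)) ∧
    U (a + 1/2) ⊓ V = Submodule.span ℝ {ξ} := by
  have h2 : (0:ℝ) < Real.sqrt 2 := by positivity
  have key : ∀ u : ℝ, ∀ x ∈ U u ⊓ V,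
      ∃ t : ℝ, x = t • ξ ∧
        t * (Real.sqrt 2 / 2 - Real.sqrt 2 * u + a * Real.sqrt 2) = 0 := by
    intro u x hx
    rw [Submodule.mem_inf, hU u, hV, Submodule.mem_span_pair,
      Submodule.mem_span_pair] at hx
    obtain ⟨hxU, hxV⟩ := hx
    obtain ⟨α, β, hαβ⟩ := hxU
    obtain ⟨s, t, hst⟩ := hxV
    have e1 : x 1 = 0 := by rw [← hαβ]; simp
    have e1' : x 1 = s * (-a) := by rw [← hst]; simp
    have hs : s = 0 := by
      rcases mul_eq_zero.mp (e1'.symm.trans e1) with h | h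
      · exact h
      · exact absurd h (by simpa using ne_of_gt ha)
    subst hs
    refine ⟨t, ?_, ?_⟩
    · rw [← hst, hξ]; funext i; fin_cases i <;> simp
    · have e0 : x 0 = α := by rw [← hαβ]; simp
      have e0' : x 0 = t := by rw [← hst]; simp
      have e2 : x 2 = α * (Real.sqrt 2 / 2 - Real.sqrt 2 * u) := by
        rw [← hαβ]; simp
      have e2' : x 2 = t * (-a * Real.sqrt 2) := by rw [← hst]; simp
      have hα : α = t := by rw [← e0, e0']
      rw [hα] at e2
      nlinarith [e2, e2']
  have hξmemV : ξ ∈ V := by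
    rw [hV, Submodule.mem_span_pair]
    exact ⟨0, 1, by rw [hξ]; funext i; fin_cases i <;> simp⟩
  have hξmemU : ξ ∈ U (a + 1/2) := by
    rw [hU, Submodule.mem_span_pair]
    refine ⟨1, Real.sqrt 2, ?_⟩
    rw [hξ]; funext i; fin_cases i <;> simp <;> ring
  have hξne : ξ ≠ 0 := by
    rw [hξ]; intro h
    have := congrFun h 0; simp at this
  constructor
  · intro u hu0 hu1
    constructor
    · intro hne
      obtain ⟨x, hx, hx0⟩ := Submodule.exists_mem_ne_zero_of_ne_bot hne
      obtain ⟨t, hxt, htD⟩ := key u x hx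
      have ht : t ≠ 0 := by
        intro h; apply hx0; rw [hxt, h, zero_smul]
      have hD : Real.sqrt 2 / 2 - Real.sqrt 2 * u + a * Real.sqrt 2 = 0 :=
        (mul_eq_zero.mp htD).resolve_left ht
      have hfac : Real.sqrt 2 * (1/2 - u + a) = 0 := by linear_combination hD
      have := (mul_eq_zero.mp hfac).resolve_left (ne_of_gt h2)
      linarith
    · intro h; subst h
      intro hbot
      have hm : ξ ∈ U (a + 1/2) ⊓ V := ⟨hξmemU, hξmemV⟩
      rw [hbot, Submodule.mem_bot] at hm
      exact hξne hm
  · apply le_antisymm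
    · intro x hx
      obtain ⟨t, hxt, _⟩ := key (a + 1/2) x hx
      rw [Submodule.mem_span_singleton]
      exact ⟨t, hxt.symm⟩
    · rw [Submodule.span_singleton_le_iff_mem]
      exact ⟨hξmemU, hξmemV⟩
end

section
/- Let 0 < a < 1/2, f(u) = u(1-u)(u-a), c = √2(a - 1/2), and ξ = (1, 0, -a√2, √2) ∈ ℝ⁴. Let J be the matrix with rows (0,0,1,0),(0,0,0,-1),(-1,0,0,0),(0,1,0,0), and let A be the matrix with rows (0,0,1,0),(0,0,0,0),(-f'(a+1/2),1,-c,0),(-1,γ,0,-c). Then ⟨ξ, J A ξ⟩ = -f'(a + 1/2) + c·a√2 - 2a² = a² - 1/4 < 0. -/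
open Real Matrix

theorem hasDerivAt_bistable_cubic (a x : ℝ) :
    HasDerivAt (fun u : ℝ => u * (1 - u) * (u - a)) (-3 * x ^ 2 + 2 * (1 + a) * x - a) x := by
  refine (((hasDerivAt_id' x).mul ((hasDerivAt_const x 1).sub (hasDerivAt_id' x))).mul
    ((hasDerivAt_id' x).sub (hasDerivAt_const x a))).congr_deriv ?_
  simp only [Pi.mul_apply, Pi.sub_apply]
  ring

theorem deriv_bistable_cubic_at_conjugate_point (a : ℝ) :
    deriv (fun u : ℝ => u * (1 - u) * (u - a)) (a + 1 / 2) = -a ^ 2 - a + 1 / 4 := by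
  rw [(hasDerivAt_bistable_cubic a _).deriv]
  ring

theorem crossing_form_eq (a s d c γ : ℝ) :
    ![1, 0, -a * s, s] ⬝ᵥ (!![0, 0, 1, 0; 0, 0, 0, -1; -1, 0, 0, 0; 0, 1, 0, 0] *ᵥ
      (!![0, 0, 1, 0; 0, 0, 0, 0; -d, 1, -c, 0; -1, γ, 0, -c] *ᵥ ![1, 0, -a * s, s])) =
      -d + c * (a * s) - a ^ 2 * s ^ 2 := by
  simp only [dotProduct, mulVec, of_apply, cons_val', cons_val_fin_one, Fin.sum_univ_four,
    Fin.isValue, cons_val_zero, cons_val_one, cons_val]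
  ring

/-- The crossing form at the conjugate point on the fast front is negative:
`⟨ξ, JAξ⟩ = -f'(a + 1/2) + c a√2 - 2a² = a² - 1/4 < 0`. -/
theorem stmt_13 (a γ : ℝ) (ha : 0 < a) (ha' : a < 1/2)
    (f : ℝ → ℝ) (hf : ∀ x, f x = x * (1 - x) * (x - a))
    (c : ℝ) (hc : c = Real.sqrt 2 * (a - 1/2))
    (ξ : Fin 4 → ℝ) (hξ : ξ = ![1, 0, -a * Real.sqrt 2, Real.sqrt 2])
    (J : Matrix (Fin 4) (Fin 4) ℝ)
    (hJ : J = !![0,0,1,0; 0,0,0,-1; -1,0,0,0; 0,1,0,0])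
    (A : Matrix (Fin 4) (Fin 4) ℝ)
    (hA : A = !![0,0,1,0; 0,0,0,0;
      -(deriv f (a + 1/2)), 1, -c, 0; -1, γ, 0, -c]) :
    ξ ⬝ᵥ (J *ᵥ (A *ᵥ ξ)) = -(deriv f (a + 1/2)) + c * (a * Real.sqrt 2) - 2 * a^2 ∧
    ξ ⬝ᵥ (J *ᵥ (A *ᵥ ξ)) = a^2 - 1/4 ∧
    ξ ⬝ᵥ (J *ᵥ (A *ᵥ ξ)) < 0 := by
  have hsq : Real.sqrt 2 ^ 2 = 2 := Real.sq_sqrt (by norm_num)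
  have hd : deriv f (a + 1/2) = -a ^ 2 - a + 1 / 4 := by
    rw [funext hf, deriv_bistable_cubic_at_conjugate_point]
  have hform : ξ ⬝ᵥ (J *ᵥ (A *ᵥ ξ)) = -(deriv f (a + 1/2)) + c * (a * Real.sqrt 2) - 2 * a^2 := by
    rw [hξ, hJ, hA, crossing_form_eq, hsq]
    ring
  have hvalue : ξ ⬝ᵥ (J *ᵥ (A *ᵥ ξ)) = a ^ 2 - 1 / 4 := by
    rw [hform, hd, hc]
    linear_combination (a ^ 2 - a / 2) * hsq
  exact ⟨hform, hvalue, by rw [hvalue]; nlinarith⟩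
end

section
/- For 0 < a < 1/2, the quantity 2√(AC) - B is strictly positive, where A = a(1-2a)(3-2a)(1-a), B = 4a(1-2a)(3-2a), and C = 16a(1-a). Consequently the function h(z) = A e^{-z√2/2} - B + C e^{z√2/2} is strictly positive for all z ∈ ℝ. -/
open Real

lemma amgm_aux (x y : ℝ) (hx : 0 ≤ x) (hy : 0 ≤ y) :
    2 * Real.sqrt (x * y) ≤ x + y := by
  rw [Real.sqrt_mul hx]
  nlinarith [Real.sq_sqrt hx, Real.sq_sqrt hy,
    sq_nonneg (Real.sqrt x - Real.sqrt y)]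

/-- With `A = a(1-2a)(3-2a)(1-a)`, `B = 4a(1-2a)(3-2a)`, `C = 16a(1-a)`, one has
`2√(AC) - B > 0`, and hence `h(z) = A e^{-z√2/2} - B + C e^{z√2/2} > 0` for all `z`. -/
theorem stmt_14 (a : ℝ) (ha : 0 < a) (ha' : a < 1/2)
    (A B C : ℝ)
    (hA : A = a * (1 - 2*a) * (3 - 2*a) * (1 - a))
    (hB : B = 4 * a * (1 - 2*a) * (3 - 2*a))
    (hC : C = 16 * a * (1 - a)) :
    0 < 2 * Real.sqrt (A * C) - B ∧
    ∀ z : ℝ, 0 < A * Real.exp (-z * Real.sqrt 2 / 2) - B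
        + C * Real.exp (z * Real.sqrt 2 / 2) := by
  have ha2 : (0:ℝ) < 1 - 2*a := by linarith
  have ha3 : (0:ℝ) < 3 - 2*a := by linarith
  have ha1 : (0:ℝ) < 1 - a := by linarith
  set D : ℝ := (1 - 2*a) * (3 - 2*a) with hD
  have hDpos : 0 < D := mul_pos ha2 ha3
  have hsDpos : 0 < Real.sqrt D := Real.sqrt_pos.mpr hDpos
  have hsDsq : Real.sqrt D * Real.sqrt D = D := Real.mul_self_sqrt hDpos.le
  have hsDlt : Real.sqrt D < 2 * (1 - a) := by
    rw [show (2 : ℝ) * (1 - a) = Real.sqrt ((2*(1-a))^2) from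
      (Real.sqrt_sq (by linarith)).symm]
    apply Real.sqrt_lt_sqrt hDpos.le
    nlinarith
  have hAC : A * C = (4 * a * (1 - a))^2 * D := by rw [hA, hC]; ring
  have hsAC : Real.sqrt (A * C) = 4 * a * (1 - a) * Real.sqrt D := by
    rw [hAC, Real.sqrt_mul (sq_nonneg _), Real.sqrt_sq (by nlinarith)]
  have key : 0 < 2 * Real.sqrt (A * C) - B := by
    rw [hsAC, hB]
    have h1 : D < 2 * (1 - a) * Real.sqrt D := by nlinarith
    nlinarith
  refine ⟨key, fun z => ?_⟩
  have hApos : 0 < A := by rw [hA]; positivity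
  have hCpos : 0 < C := by rw [hC]; positivity
  have he1 : 0 < Real.exp (-z * Real.sqrt 2 / 2) := Real.exp_pos _
  have he2 : 0 < Real.exp (z * Real.sqrt 2 / 2) := Real.exp_pos _
  have hprod : Real.exp (-z * Real.sqrt 2 / 2) * Real.exp (z * Real.sqrt 2 / 2) = 1 := by
    rw [← Real.exp_add]; ring_nf; exact Real.exp_zero
  have hAM := amgm_aux (A * Real.exp (-z * Real.sqrt 2 / 2))
    (C * Real.exp (z * Real.sqrt 2 / 2))
    (by positivity) (by positivity)
  have hxy : A * Real.exp (-z * Real.sqrt 2 / 2) * (C * Real.exp (z * Real.sqrt 2 / 2))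
      = A * C := by
    rw [show A * Real.exp (-z * Real.sqrt 2 / 2) * (C * Real.exp (z * Real.sqrt 2 / 2))
      = A * C * (Real.exp (-z * Real.sqrt 2 / 2) * Real.exp (z * Real.sqrt 2 / 2)) from by ring,
      hprod, mul_one]
  rw [hxy] at hAM
  linarith
end
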